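/- Let F be an algebraically closed field of characteristic 0 and W ⊆ (F*)^n an irreducible Zariski closed subset. Then W has only finitely many m-th roots for each m: every irreducible variety X with {x^m : x ∈ X} = W is an irreducible component of the Zariski closed set Y = {x ∈ (F*)^n : x^m ∈ W}. -/

import Mathlib

def ZarClosed {F : Type*} [Field F] {n : ℕ} (S : Set (Fin n → F)) : Prop :=
  ∃ I : Set (MvPolynomial (Fin n) F), S = {x | ∀ p ∈ I, MvPolynomial.eval x p = 0}

def unitsSet (F : Type*) [Field F] (n : ℕ) : Set (Fin n → F) := {x | ∀ i, x i ≠ 0}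

def ZarClosedIn {F : Type*} [Field F] {n : ℕ} (U S : Set (Fin n → F)) : Prop :=
  ∃ W, ZarClosed W ∧ S = W ∩ U

def IrredIn {F : Type*} [Field F] {n : ℕ} (U S : Set (Fin n → F)) : Prop :=
  S.Nonempty ∧ ∀ C₁ C₂ : Set (Fin n → F), ZarClosedIn U C₁ → ZarClosedIn U C₂ →
    S = C₁ ∪ C₂ → S = C₁ ∨ S = C₂

def powMap {F : Type*} [Field F] {n : ℕ} (m : ℕ) (x : Fin n → F) : Fin n → F :=
  fun i => x i ^ m

/-- An `m`-th root of an irreducible variety `W ⊆ (F*)^n`: an irreducible Zariski closed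
subset `X` of `(F*)^n` with `{x^m : x ∈ X} = W`. -/
def MthRoot {F : Type*} [Field F] {n : ℕ} (m : ℕ) (W X : Set (Fin n → F)) : Prop :=
  ZarClosedIn (unitsSet F n) X ∧ IrredIn (unitsSet F n) X ∧ powMap m '' X = W

/-! If `X` is an `m`-th root of `W`, then `Y = {x ∈ (F*)^n : x^m ∈ W}` is the union of the
translates `ζ • X` by the finitely many `ζ ∈ μ_m^n`, each closed and irreducible. An irreducible
closed `X' ⊆ Y` therefore lies in a single translate `ζ • X`; if also `X ⊆ X'`, then
`X ⊆ ζ • X`, which forces `ζ • X = X` because `ζ` has finite order, so `X' = X`. Applied to two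
roots, this shows that every root is a translate of a fixed one, hence there are finitely many. -/

open MvPolynomial Set
open scoped Pointwise

section ZariskiClosed

variable {F : Type*} [Field F] {n : ℕ}

theorem ZarClosed.preimage_eval {k : ℕ} {S : Set (Fin n → F)} (hS : ZarClosed S)
    (g : Fin n → MvPolynomial (Fin k) F) :
    ZarClosed ((fun x i => eval x (g i)) ⁻¹' S) := by
  obtain ⟨I, rfl⟩ := hS
  refine ⟨bind₁ g '' I, ?_⟩
  have heval (x : Fin k → F) (p : MvPolynomial (Fin n) F) :
      eval x (bind₁ g p) = eval (fun i => eval x (g i)) p :=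
    eval₂Hom_bind₁ (RingHom.id F) x g p
  ext x
  simp [heval]

theorem zarClosed_empty : ZarClosed (∅ : Set (Fin n → F)) :=
  ⟨{1}, by simp⟩

theorem ZarClosed.inter {S T : Set (Fin n → F)} (hS : ZarClosed S) (hT : ZarClosed T) :
    ZarClosed (S ∩ T) := by
  obtain ⟨I, rfl⟩ := hS
  obtain ⟨J, rfl⟩ := hT
  exact ⟨I ∪ J, by ext x; simp [or_imp, forall_and]⟩

theorem ZarClosed.union {S T : Set (Fin n → F)} (hS : ZarClosed S) (hT : ZarClosed T) :
    ZarClosed (S ∪ T) := by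
  obtain ⟨I, rfl⟩ := hS
  obtain ⟨J, rfl⟩ := hT
  refine ⟨image2 (· * ·) I J, Set.ext fun x => ⟨?_, fun h => ?_⟩⟩
  · rintro (h | h) _ ⟨p, hp, q, hq, rfl⟩
    · simp [h p hp]
    · simp [h q hq]
  · by_cases hI : ∀ p ∈ I, eval x p = 0
    · exact Or.inl hI
    push Not at hI
    obtain ⟨p, hp, hpx⟩ := hI
    refine Or.inr fun q hq => (mul_eq_zero.1 ?_).resolve_left hpx
    simpa using h _ (mem_image2_of_mem hp hq)

variable {U S T : Set (Fin n → F)}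

theorem ZarClosedIn.subset (h : ZarClosedIn U S) : S ⊆ U := by
  obtain ⟨V, -, rfl⟩ := h
  exact inter_subset_right

theorem ZarClosedIn.inter (hS : ZarClosedIn U S) (hT : ZarClosedIn U T) :
    ZarClosedIn U (S ∩ T) := by
  obtain ⟨V, hV, rfl⟩ := hS
  obtain ⟨V', hV', rfl⟩ := hT
  exact ⟨V ∩ V', hV.inter hV', (inter_inter_distrib_right V V' U).symm⟩

theorem ZarClosedIn.union (hS : ZarClosedIn U S) (hT : ZarClosedIn U T) :
    ZarClosedIn U (S ∪ T) := by
  obtain ⟨V, hV, rfl⟩ := hS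
  obtain ⟨V', hV', rfl⟩ := hT
  exact ⟨V ∪ V', hV.union hV', (union_inter_distrib_right V V' U).symm⟩

theorem zarClosedIn_biUnion {ι : Type*} (t : Finset ι) {C : ι → Set (Fin n → F)}
    (hC : ∀ i ∈ t, ZarClosedIn U (C i)) : ZarClosedIn U (⋃ i ∈ t, C i) := by
  classical
  induction t using Finset.induction_on with
  | empty => exact ⟨∅, zarClosed_empty, by simp⟩
  | insert a t _ ih =>
    rw [Finset.set_biUnion_insert]
    exact (hC a (by simp)).union (ih fun i hi => hC i (by simp [hi]))

end ZariskiClosed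

section Irreducible

variable {F : Type*} [Field F] {n : ℕ} {U S C₁ C₂ : Set (Fin n → F)}

theorem IrredIn.subset_or_subset (hSc : ZarClosedIn U S) (hSi : IrredIn U S)
    (hC₁ : ZarClosedIn U C₁) (hC₂ : ZarClosedIn U C₂) (h : S ⊆ C₁ ∪ C₂) :
    S ⊆ C₁ ∨ S ⊆ C₂ := by
  have hS : S = S ∩ C₁ ∪ S ∩ C₂ := by rw [← inter_union_distrib_left, inter_eq_left.2 h]
  refine (hSi.2 _ _ (hSc.inter hC₁) (hSc.inter hC₂) hS).imp ?_ ?_ <;>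
    exact fun h => h ▸ inter_subset_right

theorem IrredIn.exists_subset_of_subset_biUnion (hSc : ZarClosedIn U S) (hSi : IrredIn U S)
    {ι : Type*} (t : Finset ι) {C : ι → Set (Fin n → F)} (hC : ∀ i ∈ t, ZarClosedIn U (C i))
    (h : S ⊆ ⋃ i ∈ t, C i) : ∃ i ∈ t, S ⊆ C i := by
  classical
  induction t using Finset.induction_on with
  | empty => simp [hSi.1.ne_empty] at h
  | insert a t _ ih =>
    rw [Finset.set_biUnion_insert] at h
    rcases hSi.subset_or_subset hSc (hC a (by simp))
      (zarClosedIn_biUnion t fun i hi => hC i (by simp [hi])) h with ha | ht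
    · exact ⟨a, by simp, ha⟩
    · obtain ⟨i, hi, hSi⟩ := ih (fun i hi => hC i (by simp [hi])) ht
      exact ⟨i, by simp [hi], hSi⟩

theorem IrredIn.image (hSc : ZarClosedIn U S) (hSi : IrredIn U S) {f : (Fin n → F) → Fin n → F}
    (hf : ∀ C, ZarClosedIn U C → ZarClosedIn U (f ⁻¹' C)) : IrredIn U (f '' S) := by
  refine ⟨hSi.1.image f, fun C₁ C₂ hC₁ hC₂ h => ?_⟩
  have hsub : S ⊆ f ⁻¹' C₁ ∪ f ⁻¹' C₂ := by
    rw [← preimage_union, ← h]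
    exact subset_preimage_image f S
  refine (hSi.subset_or_subset hSc (hf _ hC₁) (hf _ hC₂) hsub).imp ?_ ?_ <;>
    intro hS <;> refine (image_subset_iff.2 hS).antisymm ?_ <;> rw [h]
  exacts [subset_union_left, subset_union_right]

end Irreducible

section Torus

variable {F : Type*} [Field F] {n : ℕ}

theorem mem_unitsSet_iff_isUnit {x : Fin n → F} : x ∈ unitsSet F n ↔ IsUnit x := by
  simp [unitsSet, Pi.isUnit_iff]

theorem preimage_units_smul_unitsSet (u : (Fin n → F)ˣ) :
    (fun x => u • x) ⁻¹' unitsSet F n = unitsSet F n := by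
  ext x
  simp [mem_unitsSet_iff_isUnit, Units.smul_def]

theorem ZarClosedIn.units_smul {S : Set (Fin n → F)} (hS : ZarClosedIn (unitsSet F n) S)
    (u : (Fin n → F)ˣ) : ZarClosedIn (unitsSet F n) (u • S) := by
  obtain ⟨V, hV, rfl⟩ := hS
  rw [← preimage_smul_inv, preimage_inter, preimage_units_smul_unitsSet]
  refine ⟨_, ?_, rfl⟩
  convert hV.preimage_eval fun i => C (((u⁻¹ : (Fin n → F)ˣ) : Fin n → F) i) * X i
  simp [Units.smul_def]

theorem IrredIn.units_smul {S : Set (Fin n → F)} (hSc : ZarClosedIn (unitsSet F n) S)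
    (hSi : IrredIn (unitsSet F n) S) (u : (Fin n → F)ˣ) : IrredIn (unitsSet F n) (u • S) :=
  hSi.image (f := fun x => u • x) hSc fun C hC => by rw [preimage_smul]; exact hC.units_smul u⁻¹

end Torus

theorem finite_rootsOfUnity_pi (ι R : Type*) [Finite ι] [CommRing R] [IsDomain R] (m : ℕ)
    [NeZero m] : (rootsOfUnity m (ι → R) : Set (ι → R)ˣ).Finite := by
  refine ((Set.Finite.pi (t := fun _ : ι => (rootsOfUnity m R : Set Rˣ)) fun _ =>
    Set.finite_coe_iff.1 (inferInstance : Finite (rootsOfUnity m R))).preimage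
    MulEquiv.piUnits.injective.injOn).subset fun ζ hζ i _ => ?_
  rw [SetLike.mem_coe, mem_rootsOfUnity] at hζ ⊢
  rw [← Pi.pow_apply, ← map_pow, hζ, map_one, Pi.one_apply]

theorem exists_mem_rootsOfUnity_mul_eq {M : Type*} [CommMonoid M] {m : ℕ} {x y : Mˣ}
    (h : x ^ m = y ^ m) : ∃ ζ ∈ rootsOfUnity m M, ζ * x = y :=
  ⟨y * x⁻¹, by simp [mul_pow, h], inv_mul_cancel_right y x⟩

theorem MulAction.smul_set_eq_of_subset {G α : Type*} [Group G] [MulAction G α] {g : G}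
    (hg : IsOfFinOrder g) {X : Set α} (h : X ⊆ g • X) : g • X = X := by
  have hpow : ∀ k : ℕ, X ⊆ g ^ k • X := by
    intro k
    induction k with
    | zero => simp
    | succ k ih => exact h.trans (by rw [pow_succ', mul_smul]; exact smul_set_mono ih)
  refine subset_antisymm ?_ h
  obtain ⟨m, hm, hgm⟩ := isOfFinOrder_iff_pow_eq_one.1 hg
  calc g • X ⊆ g • g ^ (m - 1) • X := smul_set_mono (hpow _)
    _ = X := by rw [smul_smul, ← pow_succ', Nat.sub_add_cancel hm, hgm, one_smul]

section Roots

variable {F : Type*} [Field F] {n m : ℕ} {W X X' : Set (Fin n → F)}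

def rootLocus (m : ℕ) (W : Set (Fin n → F)) : Set (Fin n → F) :=
  {x ∈ unitsSet F n | powMap m x ∈ W}

theorem powMap_units_smul {ζ : (Fin n → F)ˣ} (hζ : ζ ∈ rootsOfUnity m (Fin n → F))
    (x : Fin n → F) : powMap m (ζ • x) = powMap m x := by
  rw [mem_rootsOfUnity'] at hζ
  change (ζ • x) ^ m = x ^ m
  rw [Units.smul_def, smul_eq_mul, mul_pow, hζ, one_mul]

theorem MthRoot.subset_rootLocus (hX : MthRoot m W X) : X ⊆ rootLocus m W := fun _ hx =>
  ⟨hX.1.subset hx, hX.2.2 ▸ mem_image_of_mem _ hx⟩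

theorem MthRoot.units_smul_subset_rootLocus (hX : MthRoot m W X) {ζ : (Fin n → F)ˣ}
    (hζ : ζ ∈ rootsOfUnity m (Fin n → F)) : ζ • X ⊆ rootLocus m W := by
  intro y hy
  obtain ⟨x, hx, rfl⟩ := mem_smul_set.1 hy
  obtain ⟨hxU, hxW⟩ := hX.subset_rootLocus hx
  refine ⟨?_, by rwa [powMap_units_smul hζ]⟩
  rw [mem_unitsSet_iff_isUnit] at hxU ⊢
  exact (Units.isUnit_units_mul ζ x).2 hxU

theorem MthRoot.rootLocus_subset_iUnion (hX : MthRoot m W X) :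
    rootLocus m W ⊆ ⋃ ζ ∈ rootsOfUnity m (Fin n → F), ζ • X := by
  rintro y ⟨hyU, hyW⟩
  obtain ⟨x, hx, hxy⟩ := hX.2.2 ▸ hyW
  have hxU := mem_unitsSet_iff_isUnit.1 (hX.1.subset hx)
  rw [mem_unitsSet_iff_isUnit] at hyU
  obtain ⟨ζ, hζ, hζxy⟩ := exists_mem_rootsOfUnity_mul_eq (x := hxU.unit) (y := hyU.unit)
    (Units.ext hxy)
  exact mem_biUnion hζ ⟨x, hx, congrArg Units.val hζxy⟩

theorem MthRoot.exists_subset_units_smul [NeZero m] (hX : MthRoot m W X)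
    (hX'c : ZarClosedIn (unitsSet F n) X') (hX'i : IrredIn (unitsSet F n) X')
    (hX'Y : X' ⊆ rootLocus m W) : ∃ ζ ∈ rootsOfUnity m (Fin n → F), X' ⊆ ζ • X := by
  have hfin := finite_rootsOfUnity_pi (Fin n) F m
  obtain ⟨ζ, hζ, hX'ζ⟩ := hX'i.exists_subset_of_subset_biUnion hX'c hfin.toFinset
    (fun ζ _ => hX.1.units_smul ζ) (by simpa using hX'Y.trans hX.rootLocus_subset_iUnion)
  exact ⟨ζ, hfin.mem_toFinset.1 hζ, hX'ζ⟩

theorem MthRoot.eq_of_subset [NeZero m] (hX : MthRoot m W X)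
    (hX'c : ZarClosedIn (unitsSet F n) X') (hX'i : IrredIn (unitsSet F n) X')
    (hXX' : X ⊆ X') (hX'Y : X' ⊆ rootLocus m W) : X' = X := by
  obtain ⟨ζ, hζ, hX'ζ⟩ := hX.exists_subset_units_smul hX'c hX'i hX'Y
  have hζX : ζ • X = X := MulAction.smul_set_eq_of_subset
    (isOfFinOrder_iff_pow_eq_one.2 ⟨m, NeZero.pos m, hζ⟩) (hXX'.trans hX'ζ)
  exact (hX'ζ.trans hζX.le).antisymm hXX'

theorem MthRoot.setOf_mthRoot_subset_image_smul [NeZero m] (hX : MthRoot m W X) :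
    {X' | MthRoot m W X'} ⊆ (· • X) '' (rootsOfUnity m (Fin n → F) : Set (Fin n → F)ˣ) := by
  intro X' hX'
  obtain ⟨ζ, hζ, hX'ζ⟩ := hX.exists_subset_units_smul hX'.1 hX'.2.1 hX'.subset_rootLocus
  exact ⟨ζ, hζ, hX'.eq_of_subset (hX.1.units_smul ζ) (hX.2.1.units_smul hX.1 ζ) hX'ζ
    (hX.units_smul_subset_rootLocus hζ)⟩

end Roots

theorem roots_finite_and_components_general {F : Type*} [Field F] {n : ℕ}
    (W : Set (Fin n → F)) (m : ℕ) (hm : 1 ≤ m) :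
    {X : Set (Fin n → F) | MthRoot m W X}.Finite ∧
    ∀ X : Set (Fin n → F), MthRoot m W X →
      X ⊆ {x ∈ unitsSet F n | powMap m x ∈ W} ∧
      ∀ X' : Set (Fin n → F), ZarClosedIn (unitsSet F n) X' → IrredIn (unitsSet F n) X' →
        X ⊆ X' → X' ⊆ {x ∈ unitsSet F n | powMap m x ∈ W} → X' = X := by
  have : NeZero m := NeZero.of_pos hm
  refine ⟨?_, fun X hX => ⟨hX.subset_rootLocus, fun X' => hX.eq_of_subset⟩⟩
  rcases {X | MthRoot m W X}.eq_empty_or_nonempty with h | ⟨X₀, hX₀⟩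
  · exact h ▸ finite_empty
  · exact ((finite_rootsOfUnity_pi (Fin n) F m).image _).subset hX₀.setOf_mthRoot_subset_image_smul

/-- `W` has only finitely many `m`-th roots, and every `m`-th root of `W` is an irreducible
component (maximal irreducible closed subset) of `Y = {x ∈ (F*)^n : x^m ∈ W}`. -/
theorem roots_finite_and_components {F : Type*} [Field F] [IsAlgClosed F] [CharZero F] {n : ℕ}
    (W : Set (Fin n → F)) (hWc : ZarClosedIn (unitsSet F n) W)
    (hWi : IrredIn (unitsSet F n) W) (m : ℕ) (hm : 1 ≤ m) :
    {X : Set (Fin n → F) | MthRoot m W X}.Finite ∧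
    ∀ X : Set (Fin n → F), MthRoot m W X →
      X ⊆ {x ∈ unitsSet F n | powMap m x ∈ W} ∧
      ∀ X' : Set (Fin n → F), ZarClosedIn (unitsSet F n) X' → IrredIn (unitsSet F n) X' →
        X ⊆ X' → X' ⊆ {x ∈ unitsSet F n | powMap m x ∈ W} → X' = X :=
  roots_finite_and_components_general W m hm
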